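/- For complex q, z with |q| < 1 and |z| ≤ 1 (and no denominator vanishing), Andrews' generalized mock theta function ω(z;q) := Σ_{n≥0} zⁿ q^{2n²+2n} / ((q; q²)_{n+1} (zq; q²)_{n+1}) equals Σ_{n≥0} zⁿ qⁿ / (q; q²)_{n+1}. -/

import Mathlib

open scoped BigOperators

/-- Finite q-Pochhammer symbol `(a; q)_n`. -/
noncomputable def qPoch (a q : ℂ) (n : ℕ) : ℂ :=
  ∏ k ∈ Finset.range n, (1 - a * q ^ k)

/-- Infinite q-Pochhammer symbol `(a; q)_∞`. -/
noncomputable def qPochInf (a q : ℂ) : ℂ :=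
  ∏' k : ℕ, (1 - a * q ^ k)

/-!
Expand `1 / (zq; q²)_{n+1} = ∑ₘ [m + n, n]_{q²} (zq)ᵐ` by the q-binomial theorem. The left-hand
side becomes an absolutely convergent double series over `(n, m)`; summed along the antidiagonals
`n + m = N` instead, its `N`-th block is `zᴺ qᴺ / (q; q²)_{N+1}` times `H_N(q)`, where `t = q²` and
`H_N(a) = ∑_{n+m=N} t^{n²} aⁿ [m + n, n]_t (a t^{n+1}; t)_m`.
By q-Pascal, `H_{N+1}(a) = (1 - a t^{N+1}) H_N(a) + a t^{N+1} H_N(a t)`, so `H_N = 1` for all `a`.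
-/

open Finset

theorem sum_antidiagonal_succ_eq_add_of_pascal {M : Type*} [AddCommMonoid M] {f g h : ℕ × ℕ → M}
    {N : ℕ} (hleft : f (0, N + 1) = g (0, N)) (hright : f (N + 1, 0) = h (N, 0))
    (hpascal : ∀ n m, n + m + 1 = N → f (n + 1, m + 1) = g (n + 1, m) + h (n, m + 1)) :
    ∑ p ∈ antidiagonal (N + 1), f p = ∑ p ∈ antidiagonal N, g p + ∑ p ∈ antidiagonal N, h p := by
  cases N with
  | zero => simp [Nat.sum_antidiagonal_succ, hleft, hright]
  | succ N =>
    rw [Nat.sum_antidiagonal_succ, Nat.sum_antidiagonal_succ', Nat.sum_antidiagonal_succ (f := g),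
      Nat.sum_antidiagonal_succ' (f := h), hleft, hright,
      sum_congr rfl fun p hp => hpascal p.1 p.2 (by rw [HasAntidiagonal.mem_antidiagonal.1 hp]),
      sum_add_distrib]
    abel

theorem HasSum.sum_antidiagonal {E : Type*} [AddCommMonoid E] [TopologicalSpace E]
    [ContinuousAdd E] [RegularSpace E] {f : ℕ × ℕ → E} {a : E} (hf : HasSum f a) :
    HasSum (fun N => ∑ p ∈ antidiagonal N, f p) a :=
  (HasAntidiagonal.sigmaAntidiagonalEquivProd.hasSum_iff.2 hf).sigma fun N =>
    (antidiagonal N).hasSum f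

theorem summable_pow_sq_mul_pow {r : ℝ} (c : ℝ) (h0 : 0 ≤ r) (h1 : r < 1) :
    Summable fun n : ℕ => r ^ (n ^ 2) * c ^ n := by
  have hlim : Filter.Tendsto (fun n : ℕ => r ^ n * |c|) Filter.atTop (nhds 0) := by
    simpa using (tendsto_pow_atTop_nhds_zero_of_lt_one h0 h1).mul_const |c|
  refine Summable.of_norm_bounded_eventually_nat summable_geometric_two ?_
  filter_upwards [hlim.eventually (ge_mem_nhds one_half_pos)] with n hn
  rw [norm_mul, norm_pow, norm_pow, Real.norm_of_nonneg h0, Real.norm_eq_abs, sq, pow_mul,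
    ← mul_pow, one_div]
  exact pow_le_pow_left₀ (by positivity) (by simpa using hn) n

/-- `qBinom t m n` is the Gaussian binomial coefficient `[m + n, n]_t`. -/
def qBinom {R : Type*} [CommSemiring R] (t : R) : ℕ → ℕ → R
  | 0, _ => 1
  | _ + 1, 0 => 1
  | m + 1, n + 1 => qBinom t m (n + 1) + t ^ (m + 1) * qBinom t (m + 1) n

section qBinom

variable {R : Type*} [CommSemiring R] (t : R)

@[simp]
theorem qBinom_zero_left (n : ℕ) : qBinom t 0 n = 1 := by
  rw [qBinom]

@[simp]
theorem qBinom_zero_right (m : ℕ) : qBinom t m 0 = 1 := by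
  cases m <;> rw [qBinom]

theorem qBinom_succ_succ (m n : ℕ) :
    qBinom t (m + 1) (n + 1) = qBinom t m (n + 1) + t ^ (m + 1) * qBinom t (m + 1) n := by
  rw [qBinom]

theorem qBinom_succ_right_eq_sum (m n : ℕ) :
    qBinom t m (n + 1) = ∑ i ∈ range (m + 1), t ^ i * qBinom t i n := by
  induction m with
  | zero => simp
  | succ m ih => rw [qBinom_succ_succ, ih, sum_range_succ _ (m + 1)]

end qBinom

theorem norm_qBinom_le {R : Type*} [NormedCommRing R] [NormOneClass R] {t : R} (ht : ‖t‖ < 1)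
    (m n : ℕ) : ‖qBinom t m n‖ ≤ (1 - ‖t‖)⁻¹ ^ n := by
  induction n generalizing m with
  | zero => simp
  | succ n ih =>
    have hgeom : ∑ i ∈ range (m + 1), ‖t‖ ^ i ≤ (1 - ‖t‖)⁻¹ := by
      rw [← tsum_geometric_of_lt_one (norm_nonneg t) ht]
      exact (summable_geometric_of_lt_one (norm_nonneg t) ht).sum_le_tsum _
        fun i _ => by positivity
    calc ‖qBinom t m (n + 1)‖ ≤ ∑ i ∈ range (m + 1), ‖t‖ ^ i * (1 - ‖t‖)⁻¹ ^ n := by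
          rw [qBinom_succ_right_eq_sum]
          refine (norm_sum_le _ _).trans (sum_le_sum fun i _ => ?_)
          exact (norm_mul_le _ _).trans
            (mul_le_mul (norm_pow_le _ _) (ih i) (norm_nonneg _) (by positivity))
      _ ≤ (1 - ‖t‖)⁻¹ ^ (n + 1) := by
          rw [← sum_mul, pow_succ']
          exact mul_le_mul_of_nonneg_right hgeom (by have := sub_pos.2 ht; positivity)

section qPoch

variable (a t : ℂ)

@[simp]
theorem qPoch_zero : qPoch a t 0 = 1 := prod_range_zero _

theorem qPoch_succ (n : ℕ) : qPoch a t (n + 1) = qPoch a t n * (1 - a * t ^ n) :=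
  prod_range_succ _ n

theorem qPoch_succ' (n : ℕ) : qPoch a t (n + 1) = (1 - a) * qPoch (a * t) t n := by
  simp only [qPoch, prod_range_succ', pow_zero, mul_one, pow_succ, mul_assoc, mul_comm]

theorem qPoch_add (m n : ℕ) : qPoch a t (m + n) = qPoch a t m * qPoch (a * t ^ m) t n := by
  simp only [qPoch, prod_range_add, pow_add, mul_assoc]

variable {a t}

theorem one_sub_norm_pow_le_norm_qPoch (ha : ‖a‖ ≤ 1) (ht : ‖t‖ ≤ 1) (n : ℕ) :
    (1 - ‖a‖) ^ n ≤ ‖qPoch a t n‖ := by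
  have hfactor : ∀ k ∈ range n, 1 - ‖a‖ ≤ ‖1 - a * t ^ k‖ := fun k _ => by
    calc 1 - ‖a‖ ≤ 1 - ‖a * t ^ k‖ := by
          gcongr
          rw [norm_mul, norm_pow]
          exact mul_le_of_le_one_right (norm_nonneg a) (pow_le_one₀ (norm_nonneg t) ht)
      _ ≤ ‖1 - a * t ^ k‖ := by simpa using norm_sub_norm_le (1 : ℂ) (a * t ^ k)
  simpa [qPoch, norm_prod] using prod_le_prod (fun _ _ => sub_nonneg.2 ha) hfactor

theorem qPoch_ne_zero (ha : ‖a‖ < 1) (ht : ‖t‖ ≤ 1) (n : ℕ) : qPoch a t n ≠ 0 :=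
  norm_pos_iff.1 <| (pow_pos (sub_pos.2 ha) n).trans_le
    (one_sub_norm_pow_le_norm_qPoch ha.le ht n)

end qPoch

/-- By `qBinom_succ_right_eq_sum`, the step `1 / (x; t)_{n+2} = 1 / (1 - x) · 1 / (t x; t)_{n+1}`
is a Cauchy product. -/
theorem hasSum_qBinom_mul_pow {t x : ℂ} (ht : ‖t‖ < 1) (hx : ‖x‖ < 1) (n : ℕ) :
    HasSum (fun m => qBinom t m n * x ^ m) (qPoch x t (n + 1))⁻¹ := by
  induction n generalizing x with
  | zero => simpa [qPoch] using hasSum_geometric_of_norm_lt_one hx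
  | succ n ih =>
    have htx : ‖t * x‖ < 1 := by
      rw [norm_mul]; exact (mul_le_of_le_one_left (norm_nonneg _) ht.le).trans_lt hx
    have hf : Summable fun i => ‖qBinom t i n * (t * x) ^ i‖ := by
      refine Summable.of_nonneg_of_le (fun _ => norm_nonneg _) (fun i => ?_)
        ((summable_geometric_of_lt_one (norm_nonneg _) htx).mul_left ((1 - ‖t‖)⁻¹ ^ n))
      rw [norm_mul, norm_pow]
      exact mul_le_mul_of_nonneg_right (norm_qBinom_le ht i n) (by positivity)
    have hg : Summable fun j => ‖x ^ j‖ := by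
      simpa [norm_pow] using summable_geometric_of_lt_one (norm_nonneg _) hx
    have hcauchy := hasSum_sum_range_mul_of_summable_norm hf hg
    have hprod : (qPoch (t * x) t (n + 1))⁻¹ * (1 - x)⁻¹ = (qPoch x t (n + 1 + 1))⁻¹ := by
      rw [qPoch_succ' x t (n + 1), mul_comm x t, mul_inv, mul_comm]
    rw [(ih htx).tsum_eq, tsum_geometric_of_norm_lt_one hx, hprod] at hcauchy
    refine hcauchy.congr_fun fun m => ?_
    rw [qBinom_succ_right_eq_sum, sum_mul]
    refine sum_congr rfl fun i hi => ?_
    obtain ⟨j, rfl⟩ := Nat.exists_eq_add_of_le (mem_range_succ_iff.1 hi)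
    rw [Nat.add_sub_cancel_left]
    ring

theorem sum_antidiagonal_qBinom_qPoch (a t : ℂ) (N : ℕ) :
    ∑ p ∈ antidiagonal N,
      t ^ (p.1 ^ 2) * a ^ p.1 * qBinom t p.2 p.1 * qPoch (a * t ^ (p.1 + 1)) t p.2 = 1 := by
  induction N generalizing a with
  | zero => simp
  | succ N ih =>
    set F : ℂ → ℕ × ℕ → ℂ := fun a p =>
      t ^ (p.1 ^ 2) * a ^ p.1 * qBinom t p.2 p.1 * qPoch (a * t ^ (p.1 + 1)) t p.2 with hF
    have hsplit : ∑ p ∈ antidiagonal (N + 1), F a p =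
        ∑ p ∈ antidiagonal N, (1 - a * t ^ (N + 1)) * F a p +
          ∑ p ∈ antidiagonal N, a * t ^ (N + 1) * F (a * t) p := by
      refine sum_antidiagonal_succ_eq_add_of_pascal ?_ ?_ fun n m hnm => ?_
      · simp only [hF, qPoch_succ, qBinom_zero_right]
        ring
      · simp only [hF, qPoch_zero, qBinom_zero_left]
        ring
      · subst hnm
        simp only [hF, qBinom_succ_succ, qPoch_succ,
          show a * t * t ^ (n + 1) = a * t ^ (n + 1 + 1) by ring]
        ring
    rw [hsplit, ← mul_sum, ← mul_sum, ih, ih]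
    ring

noncomputable def omegaDoubleTerm (q z : ℂ) (p : ℕ × ℕ) : ℂ :=
  z ^ p.1 * q ^ (2 * p.1 ^ 2 + 2 * p.1) / qPoch q (q ^ 2) (p.1 + 1) *
    (qBinom (q ^ 2) p.2 p.1 * (z * q) ^ p.2)

section omegaDoubleTerm

variable {q z : ℂ}

theorem norm_omegaDoubleTerm_le (hq : ‖q‖ < 1) (hz : ‖z‖ ≤ 1) (n m : ℕ) :
    ‖omegaDoubleTerm q z (n, m)‖ ≤ (1 - ‖q‖)⁻¹ *
      ((‖q‖ ^ 2) ^ (n ^ 2) * (‖q‖ ^ 2 * ((1 - ‖q‖)⁻¹ * (1 - ‖q‖ ^ 2)⁻¹)) ^ n) * ‖q‖ ^ m := by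
  have hq2 : 0 < 1 - ‖q‖ ^ 2 := sub_pos.2 (pow_lt_one₀ (norm_nonneg q) hq two_ne_zero)
  have hbinom : ‖qBinom (q ^ 2) m n‖ ≤ (1 - ‖q‖ ^ 2)⁻¹ ^ n := by
    have h := norm_qBinom_le (t := q ^ 2)
      (by rw [norm_pow]; exact pow_lt_one₀ (norm_nonneg q) hq two_ne_zero) m n
    rwa [norm_pow] at h
  have hpoch : (1 - ‖q‖) ^ (n + 1) ≤ ‖qPoch q (q ^ 2) (n + 1)‖ :=
    one_sub_norm_pow_le_norm_qPoch hq.le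
      (by rw [norm_pow]; exact pow_le_one₀ (norm_nonneg q) hq.le) _
  calc ‖omegaDoubleTerm q z (n, m)‖
      = ‖z‖ ^ n * ‖q‖ ^ (2 * n ^ 2 + 2 * n) / ‖qPoch q (q ^ 2) (n + 1)‖ *
          (‖qBinom (q ^ 2) m n‖ * (‖z‖ * ‖q‖) ^ m) := by
        simp [omegaDoubleTerm, norm_pow]
    _ ≤ 1 ^ n * ‖q‖ ^ (2 * n ^ 2 + 2 * n) / (1 - ‖q‖) ^ (n + 1) *
          ((1 - ‖q‖ ^ 2)⁻¹ ^ n * (1 * ‖q‖) ^ m) := by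
        gcongr
    _ = _ := by
        rw [div_eq_mul_inv, ← inv_pow]
        ring

theorem summable_omegaDoubleTerm (hq : ‖q‖ < 1) (hz : ‖z‖ ≤ 1) :
    Summable (omegaDoubleTerm q z) := by
  have hq2 : ‖q‖ ^ 2 < 1 := pow_lt_one₀ (norm_nonneg q) hq two_ne_zero
  have hrow := (summable_pow_sq_mul_pow (‖q‖ ^ 2 * ((1 - ‖q‖)⁻¹ * (1 - ‖q‖ ^ 2)⁻¹))
    (by positivity) hq2).mul_left (1 - ‖q‖)⁻¹
  refine Summable.of_norm_bounded ?_ fun p => norm_omegaDoubleTerm_le hq hz p.1 p.2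
  exact hrow.mul_of_nonneg (summable_geometric_of_lt_one (norm_nonneg q) hq)
    (fun n => by have := sub_pos.2 hq; have := sub_pos.2 hq2; positivity) fun m => by positivity

theorem hasSum_omegaDoubleTerm_row (hq : ‖q‖ < 1) (hz : ‖z‖ ≤ 1) (n : ℕ) :
    HasSum (fun m => omegaDoubleTerm q z (n, m))
      (z ^ n * q ^ (2 * n ^ 2 + 2 * n) /
        (qPoch q (q ^ 2) (n + 1) * qPoch (z * q) (q ^ 2) (n + 1))) := by
  have hzq : ‖z * q‖ < 1 := by
    rw [norm_mul]; exact (mul_le_of_le_one_left (norm_nonneg q) hz).trans_lt hq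
  have hq2 : ‖q ^ 2‖ < 1 := by rw [norm_pow]; exact pow_lt_one₀ (norm_nonneg q) hq two_ne_zero
  have h := (hasSum_qBinom_mul_pow hq2 hzq n).mul_left
    (z ^ n * q ^ (2 * n ^ 2 + 2 * n) / qPoch q (q ^ 2) (n + 1))
  rwa [← div_eq_mul_inv, div_div] at h

theorem sum_antidiagonal_omegaDoubleTerm (hq : ‖q‖ < 1) (N : ℕ) :
    ∑ p ∈ antidiagonal N, omegaDoubleTerm q z p = z ^ N * q ^ N / qPoch q (q ^ 2) (N + 1) := by
  have hq2 : ‖q ^ 2‖ ≤ 1 := by rw [norm_pow]; exact pow_le_one₀ (norm_nonneg q) hq.le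
  rw [← mul_one (z ^ N * q ^ N / _), ← sum_antidiagonal_qBinom_qPoch q (q ^ 2) N, mul_sum]
  refine sum_congr rfl fun ⟨n, m⟩ hp => ?_
  obtain rfl : n + m = N := HasAntidiagonal.mem_antidiagonal.1 hp
  have hA := qPoch_ne_zero hq hq2 (n + 1)
  have hB : qPoch (q * (q ^ 2) ^ (n + 1)) (q ^ 2) m ≠ 0 := by
    refine qPoch_ne_zero ?_ hq2 m
    rw [norm_mul, norm_pow]
    exact (mul_le_of_le_one_right (norm_nonneg q) (pow_le_one₀ (norm_nonneg _) hq2)).trans_lt hq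
  rw [show n + m + 1 = n + 1 + m by ring, qPoch_add]
  simp only [omegaDoubleTerm]
  field_simp
  ring

end omegaDoubleTerm

theorem andrews_omega_general (q z : ℂ) (hq : ‖q‖ < 1) (hz : ‖z‖ ≤ 1) :
    ∑' n : ℕ, z ^ n * q ^ (2 * n ^ 2 + 2 * n) /
        (qPoch q (q ^ 2) (n + 1) * qPoch (z * q) (q ^ 2) (n + 1))
      = ∑' n : ℕ, z ^ n * q ^ n / qPoch q (q ^ 2) (n + 1) := by
  have hsum := (summable_omegaDoubleTerm hq hz).hasSum
  have hrows := hsum.prod_fiberwise (hasSum_omegaDoubleTerm_row hq hz)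
  have hdiags := hsum.sum_antidiagonal
  simp only [sum_antidiagonal_omegaDoubleTerm hq] at hdiags
  rw [hrows.tsum_eq, hdiags.tsum_eq]

theorem andrews_omega (q z : ℂ) (hq : ‖q‖ < 1) (hz : ‖z‖ ≤ 1)
    (hden : ∀ k : ℕ, 1 - z * q ^ (2 * k + 1) ≠ 0) :
    ∑' n : ℕ, z ^ n * q ^ (2 * n ^ 2 + 2 * n) /
        (qPoch q (q ^ 2) (n + 1) * qPoch (z * q) (q ^ 2) (n + 1))
      = ∑' n : ℕ, z ^ n * q ^ n / qPoch q (q ^ 2) (n + 1) :=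
  andrews_omega_general q z hq hz
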